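/- Let π : S → M¹ be a Killing submersion from a complete 2-dimensional Riemannian manifold (S, g) onto a connected 1-dimensional Riemannian manifold, with Killing field norm μ. Then: (1) if M¹ is a circle 𝕊¹(R), then S is parabolic; (2) if M¹ = ℝ, then S is parabolic if and only if ∫_{-∞}^0 dx/μ(x) = ∞ and ∫_0^∞ dx/μ(x) = ∞. -/

import Mathlib

open MeasureTheory

/- Model of a Killing submersion `π : S → M¹` from a complete surface: the metric is
`warp μ = dx² + μ(x)²dy²` on `ℝ²`, with `π = x` and Killing field `ξ = ∂_y` of norm
`μ(x) > 0`.  If the base is the circle `𝕊¹(R) = ℝ/Lℤ` (`L = 2πR > 0`, `μ` being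
`L`-periodic), `S` is the quotient of `ℝ²` by the translation `x ↦ x + L`, whose
functions are the `x`-periodic functions on `ℝ²`.  `LB` is the Laplace–Beltrami
operator and parabolicity means every subharmonic function bounded above is
constant. -/

/-- Partial derivative in direction `i`. -/
noncomputable def pd (i : Fin 2) (u : (Fin 2 → ℝ) → ℝ) : (Fin 2 → ℝ) → ℝ :=
  fun x => fderiv ℝ u x (Pi.single i 1)

/-- The Laplace–Beltrami operator of the metric `g`. -/
noncomputable def LB (g : (Fin 2 → ℝ) → Matrix (Fin 2) (Fin 2) ℝ)
    (u : (Fin 2 → ℝ) → ℝ) : (Fin 2 → ℝ) → ℝ :=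
  fun x => (Real.sqrt (g x).det)⁻¹ *
    ∑ i, pd i (fun y => Real.sqrt (g y).det * ∑ j, ((g y)⁻¹ i j) * pd j u y) x

/-- Parabolicity: every subharmonic function bounded from above is constant. -/
def Parabolic (g : (Fin 2 → ℝ) → Matrix (Fin 2) (Fin 2) ℝ) : Prop :=
  ∀ u : (Fin 2 → ℝ) → ℝ, ContDiff ℝ 2 u → (∀ x, 0 ≤ LB g u x) →
    BddAbove (Set.range u) → ∀ x y, u x = u y

/-- The metric of a Killing submersion over a 1-manifold with Killing length `μ`. -/
noncomputable def warp (μ : ℝ → ℝ) : (Fin 2 → ℝ) → Matrix (Fin 2) (Fin 2) ℝ :=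
  fun x => Matrix.of ![![(1 : ℝ), 0], ![0, (μ (x 0)) ^ 2]]

section Toolbox

variable {u v : (Fin 2 → ℝ) → ℝ} {i j : Fin 2} {y : Fin 2 → ℝ} {h : ℝ → ℝ}

lemma pd_congr (hfg : u = v) : pd i u = pd i v := by rw [hfg]

lemma pd_const (c : ℝ) : pd i (fun _ => c) y = 0 := by
  simp [pd, fderiv_const]

lemma pd_mul (hu : DifferentiableAt ℝ u y) (hv : DifferentiableAt ℝ v y) :
    pd i (fun z => u z * v z) y = pd i u y * v y + u y * pd i v y := by
  simp [pd, fderiv_fun_mul hu hv]; ring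

/-- The projection onto coordinate 0 as CLM. -/
noncomputable def prj (i : Fin 2) : (Fin 2 → ℝ) →L[ℝ] ℝ := ContinuousLinearMap.proj i

lemma hasFDerivAt_comp_proj (hh : DifferentiableAt ℝ h (y 0)) :
    HasFDerivAt (fun z : Fin 2 → ℝ => h (z 0)) (deriv h (y 0) • prj 0) y := by
  have := (hh.hasDerivAt).comp_hasFDerivAt y (ContinuousLinearMap.hasFDerivAt (prj 0))
  exact this

lemma pd0_comp_proj (hh : DifferentiableAt ℝ h (y 0)) :
    pd 0 (fun z => h (z 0)) y = deriv h (y 0) := by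
  rw [pd, (hasFDerivAt_comp_proj hh).fderiv]
  simp [prj]

lemma pd1_comp_proj (hh : DifferentiableAt ℝ h (y 0)) :
    pd 1 (fun z => h (z 0)) y = 0 := by
  rw [pd, (hasFDerivAt_comp_proj hh).fderiv]
  simp [prj, Pi.single_eq_of_ne]

lemma contDiff_pd (hu : ContDiff ℝ 2 u) : ContDiff ℝ 1 (pd i u) := by
  have h1 : ContDiff ℝ 1 (fderiv ℝ u) := ContDiff.fderiv_right hu (by norm_num)
  exact h1.clm_apply contDiff_const

lemma differentiable_pd (hu : ContDiff ℝ 2 u) : Differentiable ℝ (pd i u) :=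
  (contDiff_pd hu).differentiable (by norm_num)

lemma continuous_pd (hu : ContDiff ℝ 2 u) : Continuous (pd i u) :=
  (contDiff_pd hu).continuous

/-- second derivative bridge -/
lemma pd_pd_eq (hu : ContDiff ℝ 2 u) (y) :
    pd i (pd j u) y = (fderiv ℝ (fderiv ℝ u) y (Pi.single i 1)) (Pi.single j 1) := by
  have hd : DifferentiableAt ℝ (fderiv ℝ u) y :=
    ((ContDiff.fderiv_right (m := 1) hu (by norm_num)).differentiable (by norm_num)) y
  have : pd j u = fun z => (fderiv ℝ u z) (Pi.single j 1) := rfl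
  rw [pd, this, fderiv_clm_apply hd (differentiableAt_const _)]
  simp

end Toolbox

section LBwarp

variable {μ : ℝ → ℝ}

lemma warp_sqrt_det (hpos : ∀ x, 0 < μ x) (y : Fin 2 → ℝ) : Real.sqrt ((warp μ y).det) = μ (y 0) := by
  rw [warp, Matrix.det_fin_two_of]
  rw [show (1 : ℝ) * (μ (y 0))^2 - 0 * 0 = (μ (y 0))^2 by ring]
  exact Real.sqrt_sq (hpos _).le

lemma warp_inv (hpos : ∀ x, 0 < μ x) (y : Fin 2 → ℝ) :
    (warp μ y)⁻¹ = Matrix.of ![![(1:ℝ), 0], ![0, ((μ (y 0))^2)⁻¹]] := by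
  apply Matrix.inv_eq_right_inv
  have hne : (μ (y 0))^2 ≠ 0 := pow_ne_zero _ (hpos _).ne'
  rw [warp, Matrix.mul_fin_two, Matrix.one_fin_two]
  congr 1 <;> field_simp <;> simp [(hpos (y 0)).ne']

lemma LB_warp (hpos : ∀ x, 0 < μ x) (u : (Fin 2 → ℝ) → ℝ) (x : Fin 2 → ℝ) :
    LB (warp μ) u x = (μ (x 0))⁻¹ *
      (pd 0 (fun y => μ (y 0) * pd 0 u y) x
        + pd 1 (fun y => (μ (y 0))⁻¹ * pd 1 u y) x) := by
  rw [LB, Fin.sum_univ_two, warp_sqrt_det hpos]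
  congr 2
  · refine congrFun (pd_congr (funext fun y => ?_)) x
    rw [warp_sqrt_det hpos, warp_inv hpos, Fin.sum_univ_two]
    simp [Matrix.cons_val_zero, Matrix.cons_val_one, Matrix.head_cons]
  · refine congrFun (pd_congr (funext fun y => ?_)) x
    rw [warp_sqrt_det hpos, warp_inv hpos, Fin.sum_univ_two]
    have hne : μ (y 0) ≠ 0 := (hpos _).ne'
    simp [Matrix.cons_val_zero, Matrix.cons_val_one, Matrix.head_cons]
    field_simp

end LBwarp

section Lap

noncomputable def lap (u : (Fin 2 → ℝ) → ℝ) : (Fin 2 → ℝ) → ℝ :=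
  fun p => pd 0 (pd 0 u) p + pd 1 (pd 1 u) p

variable {u v : (Fin 2 → ℝ) → ℝ}

lemma lap_eq_H (hu : ContDiff ℝ 2 u) (p : Fin 2 → ℝ) :
    lap u p = fderiv ℝ (fderiv ℝ u) p (Pi.single 0 1) (Pi.single 0 1)
      + fderiv ℝ (fderiv ℝ u) p (Pi.single 1 1) (Pi.single 1 1) := by
  rw [lap, pd_pd_eq hu, pd_pd_eq hu]

lemma continuous_H (hu : ContDiff ℝ 2 u) : Continuous (fderiv ℝ (fderiv ℝ u)) := by
  have h1 : ContDiff ℝ 1 (fderiv ℝ u) := ContDiff.fderiv_right hu (by norm_num)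
  exact h1.continuous_fderiv (by norm_num)

lemma continuous_lap (hu : ContDiff ℝ 2 u) : Continuous (lap u) := by
  have : lap u = fun p => fderiv ℝ (fderiv ℝ u) p (Pi.single 0 1) (Pi.single 0 1)
      + fderiv ℝ (fderiv ℝ u) p (Pi.single 1 1) (Pi.single 1 1) := funext (lap_eq_H hu)
  rw [this]
  exact (((continuous_H hu).clm_apply continuous_const).clm_apply continuous_const).add
    (((continuous_H hu).clm_apply continuous_const).clm_apply continuous_const)

lemma pd_exp (hv : DifferentiableAt ℝ v y) (i : Fin 2) :
    pd i (fun z => Real.exp (v z)) y = Real.exp (v y) * pd i v y := by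
  rw [pd, fderiv_exp hv]; simp [pd]

lemma lap_exp (hv : ContDiff ℝ 2 v) (y : Fin 2 → ℝ) :
    lap (fun z => Real.exp (v z)) y
      = Real.exp (v y) * ((pd 0 v y)^2 + (pd 1 v y)^2 + lap v y) := by
  have hdv : ∀ z, DifferentiableAt ℝ v z := fun z => (hv.differentiable (by norm_num)) z
  have hde : ∀ z, DifferentiableAt ℝ (fun w => Real.exp (v w)) z :=
    fun z => (Real.differentiable_exp _).comp z (hdv z)
  have h0 : ∀ i, pd i (fun z => Real.exp (v z)) = fun z => Real.exp (v z) * pd i v z :=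
    fun i => funext fun z => pd_exp (hdv z) i
  rw [lap, h0 0, h0 1, pd_mul (hde y) (differentiable_pd hv y),
    pd_mul (hde y) (differentiable_pd hv y), pd_exp (hdv y), pd_exp (hdv y), lap]
  ring

end Lap

section Circle

open Real intervalIntegral

noncomputable def ecirc (θ : ℝ) : Fin 2 → ℝ :=
  Real.cos θ • (Pi.single 0 1 : Fin 2 → ℝ) + Real.sin θ • (Pi.single 1 1 : Fin 2 → ℝ)

noncomputable def ecirc' (θ : ℝ) : Fin 2 → ℝ :=
  (-Real.sin θ) • (Pi.single 0 1 : Fin 2 → ℝ) + Real.cos θ • (Pi.single 1 1 : Fin 2 → ℝ)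

lemma ecirc_hasDeriv (θ : ℝ) : HasDerivAt ecirc (ecirc' θ) θ :=
  ((Real.hasDerivAt_cos θ).smul_const _).add ((Real.hasDerivAt_sin θ).smul_const _)

lemma ecirc'_hasDeriv (θ : ℝ) : HasDerivAt ecirc' (-(ecirc θ)) θ := by
  have h := (((Real.hasDerivAt_sin θ).neg).smul_const
      (Pi.single 0 1 : Fin 2 → ℝ)).add ((Real.hasDerivAt_cos θ).smul_const
      (Pi.single 1 1 : Fin 2 → ℝ))
  exact h.congr_deriv (by rw [ecirc, neg_add, neg_smul, neg_smul])

lemma ecirc_norm (θ : ℝ) : ‖ecirc θ‖ ≤ 1 := by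
  rw [pi_norm_le_iff_of_nonneg zero_le_one]
  intro i
  fin_cases i <;>
    simp [ecirc, Pi.single, Function.update, abs_cos_le_one, abs_sin_le_one]

lemma ecirc_continuous : Continuous ecirc :=
  (Real.continuous_cos.smul continuous_const).add (Real.continuous_sin.smul continuous_const)

lemma ecirc'_continuous : Continuous ecirc' :=
  ((Real.continuous_sin.neg).smul continuous_const).add
    (Real.continuous_cos.smul continuous_const)

lemma ecirc_two_pi : ecirc (2 * Real.pi) = ecirc 0 := by
  simp [ecirc, Real.cos_two_pi, Real.sin_two_pi]

lemma ecirc'_two_pi : ecirc' (2 * Real.pi) = ecirc' 0 := by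
  simp [ecirc', Real.cos_two_pi, Real.sin_two_pi]

lemma polar_identity {w : (Fin 2 → ℝ) → ℝ} (hw : ContDiff ℝ 2 w) (p : Fin 2 → ℝ) (r θ : ℝ) :
    fderiv ℝ w p (ecirc θ) + r * (fderiv ℝ (fderiv ℝ w) p (ecirc θ) (ecirc θ))
      = r * lap w p - ((fderiv ℝ (fderiv ℝ w) p (r • ecirc' θ)) (ecirc' θ)
          + fderiv ℝ w p (-(ecirc θ))) := by
  have hcs : Real.cos θ ^ 2 + Real.sin θ ^ 2 = 1 := Real.cos_sq_add_sin_sq θ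
  set H := fderiv ℝ (fderiv ℝ w) p with hH
  set D := fderiv ℝ w p with hD
  rw [lap_eq_H hw]
  simp only [ecirc, ecirc', map_add, _root_.map_smul, map_neg, ContinuousLinearMap.add_apply,
    ContinuousLinearMap.smul_apply, ContinuousLinearMap.coe_smul', Pi.smul_apply,
    ContinuousLinearMap.neg_apply, smul_eq_mul, ← hH, ← hD]
  linear_combination (r * (H (Pi.single 0 1) (Pi.single 0 1))
    + r * (H (Pi.single 1 1) (Pi.single 1 1))) * hcs

lemma swap_integrals {F : ℝ → ℝ → ℝ} (hF : Continuous (Function.uncurry F)) {a b c d : ℝ}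
    (hab : a ≤ b) (hcd : c ≤ d) :
    ∫ x in a..b, (∫ y in c..d, F x y) = ∫ y in c..d, (∫ x in a..b, F x y) := by
  rw [intervalIntegral.integral_of_le hab, intervalIntegral.integral_of_le hcd]
  simp_rw [intervalIntegral.integral_of_le hab, intervalIntegral.integral_of_le hcd]
  apply MeasureTheory.integral_integral_swap
  have h1 : MeasureTheory.IntegrableOn (Function.uncurry F)
      (Set.Ioc a b ×ˢ Set.Ioc c d) ((volume : Measure ℝ).prod volume) := by
    apply MeasureTheory.IntegrableOn.mono_set
      (hF.continuousOn.integrableOn_compact (isCompact_Icc.prod isCompact_Icc))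
    exact Set.prod_mono Set.Ioc_subset_Icc_self Set.Ioc_subset_Icc_self
  rwa [MeasureTheory.IntegrableOn, ← Measure.prod_restrict] at h1

end Circle

section NoPos

open Real intervalIntegral Set

set_option maxHeartbeats 2000000 in
lemma no_positive_lap {w : (Fin 2 → ℝ) → ℝ} {M : ℝ} (hw : ContDiff ℝ 2 w)
    (hwpos : ∀ p, 0 < w p) (hM : ∀ p, w p ≤ M)
    (hsub : ∀ p, 0 ≤ lap w p) {q : Fin 2 → ℝ} (hq : 0 < lap w q) : False := by
  have hwd : Differentiable ℝ w := hw.differentiable (by norm_num)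
  have hC1 : ContDiff ℝ 1 (fderiv ℝ w) := ContDiff.fderiv_right hw (by norm_num)
  have hDwc : Continuous (fderiv ℝ w) := hC1.continuous
  have hHwc : Continuous (fderiv ℝ (fderiv ℝ w)) := continuous_H hw
  have hDw : ∀ p, HasFDerivAt (fderiv ℝ w) (fderiv ℝ (fderiv ℝ w) p) p :=
    fun p => (hC1.differentiable (by norm_num) p).hasFDerivAt
  set γ : ℝ → ℝ → Fin 2 → ℝ := fun r θ => q + r • ecirc θ with hγ
  have hγcont : Continuous fun p : ℝ × ℝ => γ p.1 p.2 :=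
    continuous_const.add (continuous_fst.smul (ecirc_continuous.comp continuous_snd))
  have hslice1 : ∀ {Y : Type} [TopologicalSpace Y] (f : ℝ × ℝ → Y), Continuous f →
      ∀ r, Continuous fun θ => f (r, θ) :=
    fun f hf r => hf.comp (continuous_const.prodMk continuous_id)
  have hslice2 : ∀ {Y : Type} [TopologicalSpace Y] (f : ℝ × ℝ → Y), Continuous f →
      ∀ θ, Continuous fun r => f (r, θ) :=
    fun f hf θ => hf.comp (continuous_id.prodMk continuous_const)
  -- continuity of the integrand families
  have hcontw : Continuous (Function.uncurry fun r θ => w (γ r θ)) := hw.continuous.comp hγcont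
  have hcontD : Continuous (Function.uncurry fun r θ => fderiv ℝ w (γ r θ) (ecirc θ)) :=
    (hDwc.comp hγcont).clm_apply (ecirc_continuous.comp continuous_snd)
  have hcontH : Continuous (Function.uncurry fun r θ =>
      fderiv ℝ (fderiv ℝ w) (γ r θ) (ecirc θ) (ecirc θ)) :=
    (((hHwc.comp hγcont).clm_apply (ecirc_continuous.comp continuous_snd)).clm_apply
      (ecirc_continuous.comp continuous_snd))
  have hcontDH : Continuous (Function.uncurry fun r θ => fderiv ℝ w (γ r θ) (ecirc θ)
      + r * fderiv ℝ (fderiv ℝ w) (γ r θ) (ecirc θ) (ecirc θ)) :=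
    hcontD.add (continuous_fst.mul hcontH)
  have hcontL : Continuous (Function.uncurry fun r θ => lap w (γ r θ)) :=
    (continuous_lap hw).comp hγcont
  -- derivative facts
  have hγr : ∀ r θ, HasDerivAt (fun r => γ r θ) (ecirc θ) r := by
    intro r θ
    have := ((hasDerivAt_id r).smul_const (ecirc θ)).const_add q
    rw [one_smul] at this
    exact this
  have hγθ : ∀ r θ, HasDerivAt (fun θ => γ r θ) (r • ecirc' θ) θ :=
    fun r θ => ((ecirc_hasDeriv θ).const_smul r).const_add q
  have hwr : ∀ r θ, HasDerivAt (fun r => w (γ r θ)) (fderiv ℝ w (γ r θ) (ecirc θ)) r :=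
    fun r θ => (hwd (γ r θ)).hasFDerivAt.comp_hasDerivAt r (hγr r θ)
  have hDwr : ∀ r θ, HasDerivAt (fun r => r * fderiv ℝ w (γ r θ) (ecirc θ))
      (fderiv ℝ w (γ r θ) (ecirc θ)
        + r * fderiv ℝ (fderiv ℝ w) (γ r θ) (ecirc θ) (ecirc θ)) r := by
    intro r θ
    have hc : HasDerivAt (fun r => fderiv ℝ w (γ r θ))
        (fderiv ℝ (fderiv ℝ w) (γ r θ) (ecirc θ)) r :=
      (hDw (γ r θ)).comp_hasDerivAt r (hγr r θ)
    have h2 := (hasDerivAt_id r).mul (hc.clm_apply (hasDerivAt_const r (ecirc θ)))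
    exact h2.congr_deriv (by simp)
  have hψθ : ∀ r θ, HasDerivAt (fun θ => fderiv ℝ w (γ r θ) (ecirc' θ))
      (fderiv ℝ (fderiv ℝ w) (γ r θ) (r • ecirc' θ) (ecirc' θ)
        + fderiv ℝ w (γ r θ) (-(ecirc θ))) θ := by
    intro r θ
    have hc : HasDerivAt (fun θ => fderiv ℝ w (γ r θ))
        (fderiv ℝ (fderiv ℝ w) (γ r θ) (r • ecirc' θ)) θ :=
      (hDw (γ r θ)).comp_hasDerivAt θ (hγθ r θ)
    exact hc.clm_apply (ecirc'_hasDeriv θ)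
  -- the three circle integrals
  set B : ℝ → ℝ := fun r => ∫ θ in (0:ℝ)..(2*π), w (γ r θ) with hBdef
  set G : ℝ → ℝ := fun r => ∫ θ in (0:ℝ)..(2*π), fderiv ℝ w (γ r θ) (ecirc θ) with hGdef
  set A : ℝ → ℝ := fun r => ∫ θ in (0:ℝ)..(2*π), lap w (γ r θ) with hAdef
  have hπ : (0:ℝ) ≤ 2*π := by positivity
  have hGcont : Continuous G :=
    intervalIntegral.continuous_parametric_intervalIntegral_of_continuous' hcontD 0 (2*π)
  have hAcont : Continuous A :=
    intervalIntegral.continuous_parametric_intervalIntegral_of_continuous' hcontL 0 (2*π)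
  have hIw : ∀ r, IntervalIntegrable (fun θ => w (γ r θ)) volume 0 (2*π) :=
    fun r => (hslice1 _ hcontw r).intervalIntegrable _ _
  have hID : ∀ r, IntervalIntegrable (fun θ => fderiv ℝ w (γ r θ) (ecirc θ)) volume 0 (2*π) :=
    fun r => (hslice1 _ hcontD r).intervalIntegrable _ _
  have hIDr : ∀ θ a b, IntervalIntegrable (fun r => fderiv ℝ w (γ r θ) (ecirc θ)) volume a b :=
    fun θ a b => (hslice2 _ hcontD θ).intervalIntegrable _ _
  have hIDHr : ∀ θ a b, IntervalIntegrable (fun r => fderiv ℝ w (γ r θ) (ecirc θ)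
      + r * fderiv ℝ (fderiv ℝ w) (γ r θ) (ecirc θ) (ecirc θ)) volume a b :=
    fun θ a b => (hslice2 _ hcontDH θ).intervalIntegrable _ _
  have hIL : ∀ r, IntervalIntegrable (fun θ => lap w (γ r θ)) volume 0 (2*π) :=
    fun r => (hslice1 _ hcontL r).intervalIntegrable _ _
  -- Key identity 1 : B b - B a = ∫ G
  have key1 : ∀ {a b : ℝ}, a ≤ b → B b - B a = ∫ r in a..b, G r := by
    intro a b hab
    have h1 : ∀ θ, w (γ b θ) - w (γ a θ)
        = ∫ r in a..b, fderiv ℝ w (γ r θ) (ecirc θ) := by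
      intro θ
      rw [intervalIntegral.integral_eq_sub_of_hasDerivAt (fun r _ => hwr r θ) (hIDr θ a b)]
    calc B b - B a = ∫ θ in (0:ℝ)..(2*π), (w (γ b θ) - w (γ a θ)) := by
          rw [intervalIntegral.integral_sub (hIw b) (hIw a)]
      _ = ∫ θ in (0:ℝ)..(2*π), ∫ r in a..b, fderiv ℝ w (γ r θ) (ecirc θ) := by
          exact intervalIntegral.integral_congr (fun θ _ => h1 θ)
      _ = ∫ r in a..b, G r := (swap_integrals hcontD hab hπ).symm
  -- per-r tangential identity
  have key2θ : ∀ r, (∫ θ in (0:ℝ)..(2*π), (fderiv ℝ w (γ r θ) (ecirc θ)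
      + r * fderiv ℝ (fderiv ℝ w) (γ r θ) (ecirc θ) (ecirc θ))) = r * A r := by
    intro r
    have h1 : (∫ θ in (0:ℝ)..(2*π), (fderiv ℝ w (γ r θ) (ecirc θ)
        + r * fderiv ℝ (fderiv ℝ w) (γ r θ) (ecirc θ) (ecirc θ)))
        = ∫ θ in (0:ℝ)..(2*π), (r * lap w (γ r θ)
          - (fderiv ℝ (fderiv ℝ w) (γ r θ) (r • ecirc' θ) (ecirc' θ)
            + fderiv ℝ w (γ r θ) (-(ecirc θ)))) :=
      intervalIntegral.integral_congr (fun θ _ => polar_identity hw (γ r θ) r θ)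
    have hψcont : Continuous fun θ => fderiv ℝ (fderiv ℝ w) (γ r θ) (r • ecirc' θ) (ecirc' θ)
        + fderiv ℝ w (γ r θ) (-(ecirc θ)) := by
      have c1 : Continuous fun θ => γ r θ := hslice1 _ hγcont r
      exact ((((hHwc.comp c1).clm_apply (ecirc'_continuous.const_smul r)).clm_apply
        ecirc'_continuous).add ((hDwc.comp c1).clm_apply ecirc_continuous.neg))
    have h2 : (∫ θ in (0:ℝ)..(2*π), (fderiv ℝ (fderiv ℝ w) (γ r θ) (r • ecirc' θ) (ecirc' θ)
        + fderiv ℝ w (γ r θ) (-(ecirc θ)))) = 0 := by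
      rw [intervalIntegral.integral_eq_sub_of_hasDerivAt (fun θ _ => hψθ r θ)
        (hψcont.intervalIntegrable _ _)]
      rw [hγ]
      simp [ecirc_two_pi, ecirc'_two_pi]
    rw [h1, intervalIntegral.integral_sub ((hIL r).const_mul r)
      (hψcont.intervalIntegrable _ _), h2, sub_zero, intervalIntegral.integral_const_mul]
  -- Key identity 2
  have key2 : ∀ {a b : ℝ}, a ≤ b → b * G b - a * G a = ∫ r in a..b, r * A r := by
    intro a b hab
    have h1 : ∀ θ, b * fderiv ℝ w (γ b θ) (ecirc θ) - a * fderiv ℝ w (γ a θ) (ecirc θ)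
        = ∫ r in a..b, (fderiv ℝ w (γ r θ) (ecirc θ)
          + r * fderiv ℝ (fderiv ℝ w) (γ r θ) (ecirc θ) (ecirc θ)) := by
      intro θ
      rw [intervalIntegral.integral_eq_sub_of_hasDerivAt (fun r _ => hDwr r θ) (hIDHr θ a b)]
    calc b * G b - a * G a
        = ∫ θ in (0:ℝ)..(2*π), (b * fderiv ℝ w (γ b θ) (ecirc θ)
            - a * fderiv ℝ w (γ a θ) (ecirc θ)) := by
          rw [intervalIntegral.integral_sub ((hID b).const_mul b) ((hID a).const_mul a),
            intervalIntegral.integral_const_mul, intervalIntegral.integral_const_mul]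
      _ = ∫ θ in (0:ℝ)..(2*π), ∫ r in a..b, (fderiv ℝ w (γ r θ) (ecirc θ)
            + r * fderiv ℝ (fderiv ℝ w) (γ r θ) (ecirc θ) (ecirc θ)) :=
          intervalIntegral.integral_congr (fun θ _ => h1 θ)
      _ = ∫ r in a..b, ∫ θ in (0:ℝ)..(2*π), (fderiv ℝ w (γ r θ) (ecirc θ)
            + r * fderiv ℝ (fderiv ℝ w) (γ r θ) (ecirc θ) (ecirc θ)) :=
          (swap_integrals hcontDH hab hπ).symm
      _ = ∫ r in a..b, r * A r := intervalIntegral.integral_congr (fun r _ => key2θ r)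
  -- basic positivity facts
  have hδ : 0 < lap w q := hq
  set δ : ℝ := lap w q with hδdef
  -- radius on which lap w ≥ δ/2
  obtain ⟨ρ', hρ'pos, hball⟩ : ∃ ρ' > 0, ∀ p, dist p q < ρ' → δ/2 ≤ lap w p := by
    have hc := (continuous_lap hw).continuousAt (x := q)
    rw [Metric.continuousAt_iff] at hc
    obtain ⟨ρ', h1, h2⟩ := hc (δ/2) (by positivity)
    refine ⟨ρ', h1, fun p hp => ?_⟩
    have := h2 hp
    rw [Real.dist_eq] at this
    have := (abs_lt.mp this).1
    linarith
  set ρ : ℝ := ρ'/2 with hρdef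
  have hρpos : 0 < ρ := by positivity
  have hdist : ∀ r θ, 0 ≤ r → dist (γ r θ) q ≤ r := by
    intro r θ h0
    have h1 : γ r θ - q = r • ecirc θ := by simp [hγ]
    rw [dist_eq_norm, h1, norm_smul, Real.norm_eq_abs, abs_of_nonneg h0]
    nlinarith [ecirc_norm θ, norm_nonneg (ecirc θ)]
  -- lower bound for A on [0, ρ]
  have hAlow : ∀ r, 0 ≤ r → r ≤ ρ → π * δ ≤ A r := by
    intro r h0 h1
    have hmem : ∀ θ ∈ Set.Icc (0:ℝ) (2*π), δ/2 ≤ lap w (γ r θ) := by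
      intro θ _
      apply hball
      calc dist (γ r θ) q ≤ r := hdist r θ h0
        _ ≤ ρ := h1
        _ < ρ' := by rw [hρdef]; linarith
    have := intervalIntegral.integral_mono_on hπ (intervalIntegrable_const) (hIL r) hmem
    rw [intervalIntegral.integral_const] at this
    have h2 : (2*π - 0) • (δ/2) = π * δ := by rw [smul_eq_mul]; ring
    rw [h2] at this
    exact this
  have hAnn : ∀ r, 0 ≤ A r :=
    fun r => intervalIntegral.integral_nonneg hπ (fun θ _ => hsub _)
  -- bound on the gradient integrals near 0
  obtain ⟨p₀, hp₀, hK⟩ := (isCompact_closedBall q ρ).exists_isMaxOn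
    ⟨q, Metric.mem_closedBall_self hρpos.le⟩
    ((continuous_norm.comp hDwc).continuousOn)
  set K : ℝ := ‖fderiv ℝ w p₀‖ with hKdef
  have hKnn : (0:ℝ) ≤ K := norm_nonneg _
  have hGb : ∀ ε, 0 ≤ ε → ε ≤ ρ → |G ε| ≤ K * (2*π) := by
    intro ε h0 h1
    have hb : ∀ θ ∈ Set.uIoc (0:ℝ) (2*π), ‖fderiv ℝ w (γ ε θ) (ecirc θ)‖ ≤ K := by
      intro θ _
      calc ‖fderiv ℝ w (γ ε θ) (ecirc θ)‖
          ≤ ‖fderiv ℝ w (γ ε θ)‖ * ‖ecirc θ‖ := ContinuousLinearMap.le_opNorm _ _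
        _ ≤ K * 1 := by
            apply mul_le_mul _ (ecirc_norm θ) (norm_nonneg _) hKnn
            exact isMaxOn_iff.mp hK _ (Metric.mem_closedBall.mpr (le_trans (hdist ε θ h0) h1))
        _ = K := mul_one K
    have := intervalIntegral.norm_integral_le_of_norm_le_const hb
    rw [Real.norm_eq_abs] at this
    calc |G ε| ≤ K * |2*π - 0| := this
      _ = K * (2*π) := by rw [sub_zero, abs_of_nonneg hπ]
  -- monotonicity of r * G r
  have hmono : ∀ a b, 0 ≤ a → a ≤ b → a * G a ≤ b * G b := by
    intro a b h0 hab
    have h2 := key2 hab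
    have h3 : 0 ≤ ∫ r in a..b, r * A r :=
      intervalIntegral.integral_nonneg hab
        (fun r hr => mul_nonneg (le_trans h0 hr.1) (hAnn r))
    linarith
  -- lower bound for ρ * G ρ
  set κ : ℝ := π * δ * ρ^2 / 4 with hκdef
  have hκpos : 0 < κ := by rw [hκdef]; positivity
  have hρG : κ ≤ ρ * G ρ := by
    have hbound : ∀ ε, 0 < ε → ε ≤ ρ/2 → π*δ*(ρ^2 - ε^2)/2 - ε * (K*(2*π)) ≤ ρ * G ρ := by
      intro ε hε hερ
      have hερ' : ε ≤ ρ := by linarith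
      have h2 := key2 hερ'
      have hlow : (∫ r in ε..ρ, π * δ * r) ≤ ∫ r in ε..ρ, r * A r := by
        apply intervalIntegral.integral_mono_on hερ'
          ((continuous_const.mul continuous_id).intervalIntegrable _ _)
          ((continuous_id.mul hAcont).intervalIntegrable _ _)
        intro r hr
        show π * δ * r ≤ r * A r
        have h0r : 0 ≤ r := le_trans hε.le hr.1
        have := hAlow r h0r hr.2
        nlinarith
      have hval : (∫ r in ε..ρ, π * δ * r) = π * δ * (ρ^2 - ε^2)/2 := by
        rw [intervalIntegral.integral_const_mul, integral_id]
        ring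
      have hεG : -(ε * (K*(2*π))) ≤ ε * G ε := by
        have h4 := hGb ε hε.le hερ'
        have h5 := neg_abs_le (G ε)
        nlinarith
      rw [hval] at hlow
      linarith
    set C : ℝ := K * (2*π) + 1 with hCdef
    have hC : 0 < C := by positivity
    set ε : ℝ := min (ρ/2) (π*δ*ρ^2/(8*C)) with hεdef
    have hε2 : ε ≤ ρ/2 := min_le_left _ _
    have hε3 : ε ≤ π*δ*ρ^2/(8*C) := min_le_right _ _
    have hεpos : 0 < ε := lt_min (by positivity) (by positivity)
    have h1 := hbound ε hεpos hε2
    have h6 : ε * (K*(2*π)) ≤ ε * C := by nlinarith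
    have h7 : ε * C ≤ π*δ*ρ^2/8 := by
      have := mul_le_mul_of_nonneg_right hε3 hC.le
      calc ε * C ≤ (π*δ*ρ^2/(8*C)) * C := this
        _ = π*δ*ρ^2/8 := by field_simp
    have h8 : ε^2 ≤ (ρ/2)^2 := by nlinarith
    have h9 : π*δ*ε^2 ≤ π*δ*(ρ/2)^2 := by
      apply mul_le_mul_of_nonneg_left h8 (by positivity)
    rw [hκdef]
    nlinarith [h1, h6, h7, h9]
  -- growth of B gives the contradiction
  have hGlow : ∀ r, ρ ≤ r → κ * r⁻¹ ≤ G r := by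
    intro r hr
    have h0 : 0 < r := lt_of_lt_of_le hρpos hr
    have h1 := hmono ρ r hρpos.le hr
    rw [mul_inv_le_iff₀ h0]
    nlinarith [hρG, h1]
  have hBub : ∀ r, B r ≤ 2*π*M := by
    intro r
    have h1 := intervalIntegral.integral_mono_on hπ (hIw r) intervalIntegrable_const
      (fun θ _ => hM (γ r θ))
    rw [intervalIntegral.integral_const, smul_eq_mul] at h1
    calc B r ≤ (2*π - 0) * M := h1
      _ = 2*π*M := by ring
  have hBnn : ∀ r, 0 ≤ B r :=
    fun r => intervalIntegral.integral_nonneg hπ (fun θ _ => (hwpos _).le)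
  have hMpos : 0 < M := lt_of_lt_of_le (hwpos q) (hM q)
  have hfinal : ∀ R, ρ ≤ R → κ * (Real.log R - Real.log ρ) ≤ 2*π*M := by
    intro R hR
    have hRpos : 0 < R := lt_of_lt_of_le hρpos hR
    have h1 := key1 hR
    have hci : ContinuousOn (fun r : ℝ => κ * r⁻¹) (Set.uIcc ρ R) := by
      rw [Set.uIcc_of_le hR]
      exact continuousOn_const.mul (ContinuousOn.inv₀ continuousOn_id
        (fun x hx => ne_of_gt (lt_of_lt_of_le hρpos hx.1)))
    have h2 : (∫ r in ρ..R, κ * r⁻¹) ≤ ∫ r in ρ..R, G r :=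
      intervalIntegral.integral_mono_on hR hci.intervalIntegrable
        (hGcont.intervalIntegrable _ _) (fun r hr => hGlow r hr.1)
    have h3 : (∫ r in ρ..R, κ * r⁻¹) = κ * (Real.log R - Real.log ρ) := by
      rw [intervalIntegral.integral_const_mul, integral_inv_of_pos hρpos hRpos,
        Real.log_div hRpos.ne' hρpos.ne']
    have h4 := hBub R
    have h5 := hBnn ρ
    rw [h3] at h2
    linarith
  set R : ℝ := ρ * Real.exp ((2*π*M + 1)/κ) with hRdef
  have hexp1 : 1 ≤ Real.exp ((2*π*M + 1)/κ) := by
    apply Real.one_le_exp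
    positivity
  have hRρ : ρ ≤ R := by
    rw [hRdef]
    nlinarith
  have h9 := hfinal R hRρ
  have h10 : Real.log R = Real.log ρ + (2*π*M + 1)/κ := by
    rw [hRdef, Real.log_mul hρpos.ne' (Real.exp_pos _).ne', Real.log_exp]
  rw [h10] at h9
  have h11 : κ * (Real.log ρ + (2*π*M + 1)/κ - Real.log ρ) = 2*π*M + 1 := by
    field_simp
    ring
  linarith [h9, h11.symm.le]

end NoPos

lemma liouville_lap {v : (Fin 2 → ℝ) → ℝ} {M : ℝ} (hv : ContDiff ℝ 2 v)
    (hsub : ∀ p, 0 ≤ lap v p) (hub : ∀ p, v p ≤ M) : ∀ x y, v x = v y := by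
  by_contra hcon
  push_neg at hcon
  obtain ⟨x, y, hxy⟩ := hcon
  have hne : ∃ q i, pd i v q ≠ 0 := by
    by_contra h2
    push_neg at h2
    have hz : ∀ z, fderiv ℝ v z = 0 := by
      intro z
      ext d
      have hd : d = d 0 • (Pi.single 0 1 : Fin 2 → ℝ) + d 1 • (Pi.single 1 1 : Fin 2 → ℝ) := by
        funext i; fin_cases i <;> simp
      rw [hd, map_add, _root_.map_smul, _root_.map_smul]
      have h0 := h2 z 0
      have h1 := h2 z 1
      rw [pd] at h0 h1
      simp [h0, h1]
    exact hxy (is_const_of_fderiv_eq_zero (hv.differentiable (by norm_num)) hz x y)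
  obtain ⟨q, i, hqi⟩ := hne
  have hw : ContDiff ℝ 2 (fun p => Real.exp (v p)) :=
    (Real.contDiff_exp.of_le le_top).comp hv
  have hsq : 0 < (pd i v q)^2 := lt_of_le_of_ne (sq_nonneg _) (Ne.symm (pow_ne_zero _ hqi))
  refine no_positive_lap (M := Real.exp M) hw (fun p => Real.exp_pos _)
    (fun p => Real.exp_le_exp.mpr (hub p)) (fun p => ?_) (q := q) ?_
  · rw [lap_exp hv p]
    apply mul_nonneg (Real.exp_pos _).le
    have := hsub p
    nlinarith [sq_nonneg (pd 0 v p), sq_nonneg (pd 1 v p)]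
  · rw [lap_exp hv q]
    apply mul_pos (Real.exp_pos _)
    have := hsub q
    have h01 : pd i v q = pd 0 v q ∨ pd i v q = pd 1 v q := by
      fin_cases i
      · exact Or.inl rfl
      · exact Or.inr rfl
    rcases h01 with h|h <;> rw [h] at hsq <;>
      nlinarith [sq_nonneg (pd 0 v q), sq_nonneg (pd 1 v q)]

section Coord

open Filter Set

variable {μ : ℝ → ℝ}

/-- The arc-length coordinate of the base. -/
noncomputable def Sfun (μ : ℝ → ℝ) : ℝ → ℝ := fun x => ∫ t in (0:ℝ)..x, (μ t)⁻¹

lemma contDiff_inv_mu (hμ : ContDiff ℝ (⊤ : ℕ∞) μ) (hpos : ∀ x, 0 < μ x) :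
    ContDiff ℝ (⊤ : ℕ∞) (fun x => (μ x)⁻¹) := hμ.inv (fun x => (hpos x).ne')

lemma Sfun_hasDeriv (hμ : ContDiff ℝ (⊤ : ℕ∞) μ) (hpos : ∀ x, 0 < μ x) (x : ℝ) :
    HasDerivAt (Sfun μ) (μ x)⁻¹ x := by
  have hc : Continuous fun t => (μ t)⁻¹ := (contDiff_inv_mu hμ hpos).continuous
  exact intervalIntegral.integral_hasDerivAt_right (hc.intervalIntegrable _ _)
    hc.stronglyMeasurable.stronglyMeasurableAtFilter hc.continuousAt

lemma Sfun_strictMono (hμ : ContDiff ℝ (⊤ : ℕ∞) μ) (hpos : ∀ x, 0 < μ x) :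
    StrictMono (Sfun μ) := by
  apply strictMono_of_deriv_pos
  intro x
  rw [(Sfun_hasDeriv hμ hpos x).deriv]
  exact inv_pos.mpr (hpos x)

lemma Sfun_contDiff (hμ : ContDiff ℝ (⊤ : ℕ∞) μ) (hpos : ∀ x, 0 < μ x) :
    ContDiff ℝ 2 (Sfun μ) := by
  rw [show (2 : WithTop ℕ∞) = 1 + 1 from rfl, contDiff_succ_iff_deriv]
  refine ⟨fun x => (Sfun_hasDeriv hμ hpos x).differentiableAt, by simp, ?_⟩
  have hd : deriv (Sfun μ) = fun x => (μ x)⁻¹ :=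
    funext fun x => (Sfun_hasDeriv hμ hpos x).deriv
  rw [hd]
  exact (contDiff_inv_mu hμ hpos).of_le (by norm_num)

lemma Sfun_zero : Sfun μ 0 = 0 := by simp [Sfun]

lemma Sfun_norm_eq (hpos : ∀ x, 0 < μ x) (a b : ℝ) :
    (∫ x in a..b, ‖(μ x)⁻¹‖) = ∫ x in a..b, (μ x)⁻¹ :=
  intervalIntegral.integral_congr fun x _ => by
    rw [Real.norm_eq_abs, abs_of_nonneg (inv_nonneg.mpr (hpos x).le)]

lemma Sfun_tendsto_atTop (hμ : ContDiff ℝ (⊤ : ℕ∞) μ) (hpos : ∀ x, 0 < μ x)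
    (hIci : ¬ IntegrableOn (fun x => (μ x)⁻¹) (Set.Ici 0)) :
    Tendsto (Sfun μ) atTop atTop := by
  apply tendsto_atTop_atTop_of_monotone' (Sfun_strictMono hμ hpos).monotone
  intro hbdd
  obtain ⟨c, hc⟩ := hbdd
  apply hIci
  rw [integrableOn_Ici_iff_integrableOn_Ioi]
  have hcont : Continuous fun x => (μ x)⁻¹ := (contDiff_inv_mu hμ hpos).continuous
  apply MeasureTheory.integrableOn_Ioi_of_intervalIntegral_norm_bounded c 0
    (fun i : ℝ => hcont.integrableOn_Ioc) tendsto_id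
  filter_upwards with i
  rw [Sfun_norm_eq hpos]
  exact hc ⟨i, rfl⟩

lemma Sfun_tendsto_atBot (hμ : ContDiff ℝ (⊤ : ℕ∞) μ) (hpos : ∀ x, 0 < μ x)
    (hIic : ¬ IntegrableOn (fun x => (μ x)⁻¹) (Set.Iic 0)) :
    Tendsto (Sfun μ) atBot atBot := by
  apply tendsto_atBot_atBot_of_monotone' (Sfun_strictMono hμ hpos).monotone
  intro hbdd
  obtain ⟨c, hc⟩ := hbdd
  apply hIic
  have hcont : Continuous fun x => (μ x)⁻¹ := (contDiff_inv_mu hμ hpos).continuous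
  apply MeasureTheory.integrableOn_Iic_of_intervalIntegral_norm_bounded (-c) 0
    (fun i : ℝ => hcont.integrableOn_Ioc) tendsto_id
  filter_upwards with i
  rw [Sfun_norm_eq hpos, intervalIntegral.integral_symm]
  have := hc ⟨i, rfl⟩
  simp only [Sfun] at this
  simp only [id_eq]
  linarith

lemma Sfun_surjective (hμ : ContDiff ℝ (⊤ : ℕ∞) μ) (hpos : ∀ x, 0 < μ x)
    (hIic : ¬ IntegrableOn (fun x => (μ x)⁻¹) (Set.Iic 0))
    (hIci : ¬ IntegrableOn (fun x => (μ x)⁻¹) (Set.Ici 0)) :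
    Function.Surjective (Sfun μ) :=
  Continuous.surjective ((Sfun_contDiff hμ hpos).continuous)
    (Sfun_tendsto_atTop hμ hpos hIci) (Sfun_tendsto_atBot hμ hpos hIic)

end Coord

section Key

open Filter Set

set_option maxHeartbeats 1000000 in
lemma key_parabolic {μ : ℝ → ℝ} (hμ : ContDiff ℝ (⊤ : ℕ∞) μ) (hpos : ∀ x, 0 < μ x)
    (hIic : ¬ IntegrableOn (fun x => (μ x)⁻¹) (Set.Iic 0))
    (hIci : ¬ IntegrableOn (fun x => (μ x)⁻¹) (Set.Ici 0)) :
    Parabolic (warp μ) := by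
  intro u hu hsub hbdd
  obtain ⟨M, hM⟩ := hbdd
  set S := Sfun μ with hSdef
  have hSm := Sfun_strictMono hμ hpos
  have hSsurj := Sfun_surjective hμ hpos hIic hIci
  set E := StrictMono.orderIsoOfSurjective S hSm hSsurj with hEdef
  set T : ℝ → ℝ := fun s => E.symm s with hTdef
  have hST : ∀ s, S (T s) = s := fun s => E.apply_symm_apply s
  have hTS : ∀ x, T (S x) = x := fun x => E.symm_apply_apply x
  have hTcont : Continuous T := OrderIso.continuous E.symm
  have hT' : ∀ s, HasDerivAt T (μ (T s)) s := by
    intro s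
    have h1 : HasDerivAt S (μ (T s))⁻¹ (T s) := Sfun_hasDeriv hμ hpos (T s)
    have h2 := h1.of_local_left_inverse hTcont.continuousAt
      (inv_ne_zero (hpos _).ne') (Filter.Eventually.of_forall hST)
    simpa [inv_inv] using h2
  have hTd : Differentiable ℝ T := fun s => (hT' s).differentiableAt
  have hTderiv : deriv T = fun s => μ (T s) := funext fun s => (hT' s).deriv
  have hT1 : ContDiff ℝ 1 T := contDiff_one_iff_deriv.mpr
    ⟨hTd, by rw [hTderiv]; exact hμ.continuous.comp hTcont⟩
  have hT2 : ContDiff ℝ 2 T := by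
    rw [show (2 : WithTop ℕ∞) = 1 + 1 from rfl, contDiff_succ_iff_deriv]
    refine ⟨hTd, by simp, ?_⟩
    rw [hTderiv]
    exact (hμ.of_le (by norm_num)).comp hT1
  -- the diffeomorphism Φ
  set Φ : (Fin 2 → ℝ) → (Fin 2 → ℝ) := fun p => ![T (p 0), p 1] with hΦdef
  have hΦcd : ContDiff ℝ 2 Φ := by
    apply contDiff_pi.mpr
    intro i
    fin_cases i
    · exact hT2.comp (ContinuousLinearMap.proj 0 : (Fin 2 → ℝ) →L[ℝ] ℝ).contDiff
    · exact (ContinuousLinearMap.proj 1 : (Fin 2 → ℝ) →L[ℝ] ℝ).contDiff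
  set DΦ : (Fin 2 → ℝ) → (Fin 2 → ℝ) →L[ℝ] (Fin 2 → ℝ) :=
    fun p => ContinuousLinearMap.pi ![(μ (T (p 0))) • prj 0, prj 1] with hDΦdef
  have hΦfd : ∀ p, HasFDerivAt Φ (DΦ p) p := by
    intro p
    apply hasFDerivAt_pi''
    intro i
    fin_cases i
    · have h := (hT' (p 0)).comp_hasFDerivAt p
        (prj 0 : (Fin 2 → ℝ) →L[ℝ] ℝ).hasFDerivAt
      exact h
    · have h := (prj 1 : (Fin 2 → ℝ) →L[ℝ] ℝ).hasFDerivAt (x := p)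
      exact h
  have hDΦ0 : ∀ p, DΦ p (Pi.single 0 1) = μ (T (p 0)) • (Pi.single 0 1 : Fin 2 → ℝ) := by
    intro p
    funext i
    fin_cases i <;> simp [hDΦdef, prj, ContinuousLinearMap.proj]
  have hDΦ1 : ∀ p, DΦ p (Pi.single 1 1) = (Pi.single 1 1 : Fin 2 → ℝ) := by
    intro p
    funext i
    fin_cases i <;> simp [hDΦdef, prj, ContinuousLinearMap.proj]
  have hpdΦ0 : ∀ (f : (Fin 2 → ℝ) → ℝ) p, DifferentiableAt ℝ f (Φ p) →
      pd 0 (fun z => f (Φ z)) p = μ (T (p 0)) * pd 0 f (Φ p) := by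
    intro f p hf
    have hc : HasFDerivAt (fun z => f (Φ z)) ((fderiv ℝ f (Φ p)).comp (DΦ p)) p :=
      hf.hasFDerivAt.comp p (hΦfd p)
    rw [pd, hc.fderiv, ContinuousLinearMap.comp_apply, hDΦ0, _root_.map_smul]
    simp [pd]
  have hpdΦ1 : ∀ (f : (Fin 2 → ℝ) → ℝ) p, DifferentiableAt ℝ f (Φ p) →
      pd 1 (fun z => f (Φ z)) p = pd 1 f (Φ p) := by
    intro f p hf
    have hc : HasFDerivAt (fun z => f (Φ z)) ((fderiv ℝ f (Φ p)).comp (DΦ p)) p :=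
      hf.hasFDerivAt.comp p (hΦfd p)
    rw [pd, hc.fderiv, ContinuousLinearMap.comp_apply, hDΦ1]
    rfl
  set v : (Fin 2 → ℝ) → ℝ := fun p => u (Φ p) with hvdef
  have hvcd : ContDiff ℝ 2 v := hu.comp hΦcd
  set P : (Fin 2 → ℝ) → ℝ := fun y => μ (y 0) * pd 0 u y with hPdef
  set Q : (Fin 2 → ℝ) → ℝ := fun y => (μ (y 0))⁻¹ * pd 1 u y with hQdef
  have hμproj : Differentiable ℝ (fun y : Fin 2 → ℝ => μ (y 0)) :=
    (hμ.differentiable (by simp)).comp (ContinuousLinearMap.proj 0 : (Fin 2 → ℝ) →L[ℝ] ℝ).differentiable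
  have hμinvproj : Differentiable ℝ (fun y : Fin 2 → ℝ => (μ (y 0))⁻¹) :=
    ((contDiff_inv_mu hμ hpos).differentiable (by simp)).comp
      (ContinuousLinearMap.proj 0 : (Fin 2 → ℝ) →L[ℝ] ℝ).differentiable
  have hPd : Differentiable ℝ P := hμproj.mul (differentiable_pd hu)
  have hQd : Differentiable ℝ Q := hμinvproj.mul (differentiable_pd hu)
  have hv0 : pd 0 v = fun p => P (Φ p) := by
    funext p
    rw [hvdef]
    rw [hpdΦ0 u p ((hu.differentiable (by norm_num)) _)]
    rfl
  have hv1 : pd 1 v = fun p => pd 1 u (Φ p) := by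
    funext p
    rw [hvdef]
    rw [hpdΦ1 u p ((hu.differentiable (by norm_num)) _)]
  have hQ2 : ∀ y, pd 1 (pd 1 u) y = μ (y 0) * pd 1 Q y := by
    intro y
    have hne : μ (y 0) ≠ 0 := (hpos _).ne'
    rw [hQdef]
    rw [pd_mul (hμinvproj _) (differentiable_pd hu _)]
    rw [pd1_comp_proj (((contDiff_inv_mu hμ hpos).differentiable (by simp)) _)]
    field_simp
    ring
  have hlapv : ∀ p, lap v p = (μ (T (p 0)))^2 * LB (warp μ) u (Φ p) := by
    intro p
    have hne : μ (T (p 0)) ≠ 0 := (hpos _).ne'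
    have h00 : pd 0 (pd 0 v) p = μ (T (p 0)) * pd 0 P (Φ p) := by
      rw [hv0]; exact hpdΦ0 P p (hPd _)
    have h11 : pd 1 (pd 1 v) p = pd 1 (pd 1 u) (Φ p) := by
      rw [hv1]; exact hpdΦ1 (pd 1 u) p (differentiable_pd hu _)
    have hΦp0 : (Φ p) 0 = T (p 0) := rfl
    rw [lap, h00, h11, hQ2 (Φ p), LB_warp hpos, ← hPdef, ← hQdef, hΦp0]
    field_simp
  have hsubv : ∀ p, 0 ≤ lap v p := by
    intro p
    rw [hlapv p]
    exact mul_nonneg (sq_nonneg _) (hsub _)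
  intro x y
  have hconst := liouville_lap hvcd hsubv
    (fun p => hM (Set.mem_range_self (Φ p))) ![S (x 0), x 1] ![S (y 0), y 1]
  have hx : Φ ![S (x 0), x 1] = x := by
    funext i
    fin_cases i
    · show T (S (x 0)) = x 0
      exact hTS _
    · rfl
  have hy : Φ ![S (y 0), y 1] = y := by
    funext i
    fin_cases i
    · show T (S (y 0)) = y 0
      exact hTS _
    · rfl
  calc u x = v ![S (x 0), x 1] := congrArg u hx.symm
    _ = v ![S (y 0), y 1] := hconst
    _ = u y := congrArg u hy

end Key

section Counter

open Set

lemma LB_comp_base {μ : ℝ → ℝ} (hpos : ∀ x, 0 < μ x) {h : ℝ → ℝ} {c : ℝ}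
    (hd : ∀ x, HasDerivAt h (c * (μ x)⁻¹) x) (x : Fin 2 → ℝ) :
    LB (warp μ) (fun p => h (p 0)) x = 0 := by
  rw [LB_warp hpos]
  have h0 : ∀ y : Fin 2 → ℝ, pd 0 (fun z => h (z 0)) y = c * (μ (y 0))⁻¹ := fun y => by
    rw [pd0_comp_proj (hd _).differentiableAt, (hd _).deriv]
  have h1 : ∀ y : Fin 2 → ℝ, pd 1 (fun z => h (z 0)) y = 0 := fun y =>
    pd1_comp_proj (hd _).differentiableAt
  have e0 : (fun y : Fin 2 → ℝ => μ (y 0) * pd 0 (fun z => h (z 0)) y) = fun _ => c :=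
    funext fun y => by
      rw [h0]; field_simp; exact mul_div_cancel_left₀ c (hpos _).ne'
  have e1 : (fun y : Fin 2 → ℝ => (μ (y 0))⁻¹ * pd 1 (fun z => h (z 0)) y) = fun _ => 0 :=
    funext fun y => by rw [h1]; ring
  rw [pd_congr e0, pd_congr e1, pd_const, pd_const]
  ring

lemma Sfun_le_of_integrable {μ : ℝ → ℝ} (hμ : ContDiff ℝ (⊤ : ℕ∞) μ) (hpos : ∀ x, 0 < μ x)
    (h : IntegrableOn (fun x => (μ x)⁻¹) (Set.Ici 0)) (x : ℝ) :
    Sfun μ x ≤ ∫ t in Set.Ioi (0:ℝ), (μ t)⁻¹ := by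
  have hnn : 0 ≤ ∫ t in Set.Ioi (0:ℝ), (μ t)⁻¹ :=
    MeasureTheory.setIntegral_nonneg measurableSet_Ioi (fun t _ => (inv_nonneg.mpr (hpos t).le))
  rcases le_or_gt x 0 with hx | hx
  · calc Sfun μ x ≤ Sfun μ 0 := (Sfun_strictMono hμ hpos).monotone hx
      _ = 0 := Sfun_zero
      _ ≤ _ := hnn
  · rw [Sfun, intervalIntegral.integral_of_le hx.le]
    apply MeasureTheory.setIntegral_mono_set (h.mono_set Set.Ioi_subset_Ici_self)
      (Filter.Eventually.of_forall (fun t => inv_nonneg.mpr (hpos t).le))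
      (HasSubset.Subset.eventuallyLE Set.Ioc_subset_Ioi_self)

lemma neg_Sfun_le_of_integrable {μ : ℝ → ℝ} (hμ : ContDiff ℝ (⊤ : ℕ∞) μ) (hpos : ∀ x, 0 < μ x)
    (h : IntegrableOn (fun x => (μ x)⁻¹) (Set.Iic 0)) (x : ℝ) :
    -Sfun μ x ≤ ∫ t in Set.Iic (0:ℝ), (μ t)⁻¹ := by
  have hnn : 0 ≤ ∫ t in Set.Iic (0:ℝ), (μ t)⁻¹ :=
    MeasureTheory.setIntegral_nonneg measurableSet_Iic (fun t _ => (inv_nonneg.mpr (hpos t).le))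
  rcases le_or_gt 0 x with hx | hx
  · have h1 : Sfun μ 0 ≤ Sfun μ x := (Sfun_strictMono hμ hpos).monotone hx
    rw [Sfun_zero] at h1
    linarith
  · have h2 : -Sfun μ x = ∫ t in Set.Ioc x 0, (μ t)⁻¹ := by
      rw [Sfun, ← intervalIntegral.integral_symm, intervalIntegral.integral_of_le hx.le]
    rw [h2]
    apply MeasureTheory.setIntegral_mono_set h
      (Filter.Eventually.of_forall (fun t => inv_nonneg.mpr (hpos t).le))
      (HasSubset.Subset.eventuallyLE Set.Ioc_subset_Iic_self)

lemma not_parabolic_right {μ : ℝ → ℝ} (hμ : ContDiff ℝ (⊤ : ℕ∞) μ) (hpos : ∀ x, 0 < μ x)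
    (h : IntegrableOn (fun x => (μ x)⁻¹) (Set.Ici 0)) : ¬ Parabolic (warp μ) := by
  intro hP
  set u : (Fin 2 → ℝ) → ℝ := fun p => Sfun μ (p 0) with hudef
  have hucd : ContDiff ℝ 2 u :=
    (Sfun_contDiff hμ hpos).comp (ContinuousLinearMap.proj 0 : (Fin 2 → ℝ) →L[ℝ] ℝ).contDiff
  have hd : ∀ x, HasDerivAt (Sfun μ) (1 * (μ x)⁻¹) x := by
    intro x
    simpa using Sfun_hasDeriv hμ hpos x
  have hLB : ∀ x, 0 ≤ LB (warp μ) u x := fun x => (LB_comp_base hpos hd x).ge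
  have hbdd : BddAbove (Set.range u) := by
    refine ⟨∫ t in Set.Ioi (0:ℝ), (μ t)⁻¹, ?_⟩
    rintro _ ⟨p, rfl⟩
    exact Sfun_le_of_integrable hμ hpos h (p 0)
  have := hP u hucd hLB hbdd (fun _ => (0:ℝ)) (fun _ => (1:ℝ))
  simp only [hudef] at this
  rw [Sfun_zero] at this
  exact absurd this.symm (ne_of_gt (by simpa [Sfun_zero] using (Sfun_strictMono hμ hpos) one_pos))

lemma not_parabolic_left {μ : ℝ → ℝ} (hμ : ContDiff ℝ (⊤ : ℕ∞) μ) (hpos : ∀ x, 0 < μ x)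
    (h : IntegrableOn (fun x => (μ x)⁻¹) (Set.Iic 0)) : ¬ Parabolic (warp μ) := by
  intro hP
  set u : (Fin 2 → ℝ) → ℝ := fun p => -Sfun μ (p 0) with hudef
  have hucd : ContDiff ℝ 2 u :=
    ((Sfun_contDiff hμ hpos).neg).comp (ContinuousLinearMap.proj 0 : (Fin 2 → ℝ) →L[ℝ] ℝ).contDiff
  have hd : ∀ x, HasDerivAt (fun t => -Sfun μ t) ((-1) * (μ x)⁻¹) x := by
    intro x
    have := (Sfun_hasDeriv hμ hpos x).neg
    rw [show ((-1:ℝ) * (μ x)⁻¹) = -(μ x)⁻¹ by ring]; exact this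
  have hLB : ∀ x, 0 ≤ LB (warp μ) u x := fun x => (LB_comp_base hpos hd x).ge
  have hbdd : BddAbove (Set.range u) := by
    refine ⟨∫ t in Set.Iic (0:ℝ), (μ t)⁻¹, ?_⟩
    rintro _ ⟨p, rfl⟩
    exact neg_Sfun_le_of_integrable hμ hpos h (p 0)
  have := hP u hucd hLB hbdd (fun _ => (0:ℝ)) (fun _ => (1:ℝ))
  simp only [hudef] at this
  rw [Sfun_zero] at this
  have h1 : 0 < Sfun μ 1 := by simpa [Sfun_zero] using (Sfun_strictMono hμ hpos) one_pos
  simp at this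
  linarith [this]

end Counter

section Periodic

open Set

lemma periodic_not_integrable {μ : ℝ → ℝ} (hμ : ContDiff ℝ (⊤ : ℕ∞) μ) (hpos : ∀ x, 0 < μ x)
    {L : ℝ} (hL : 0 < L) (hper : Function.Periodic μ L) (s : Set ℝ)
    (hs : MeasureTheory.volume s = ⊤) (hms : MeasurableSet s) :
    ¬ IntegrableOn (fun x => (μ x)⁻¹) s := by
  intro hint
  obtain ⟨p₀, _, hC⟩ := isCompact_Icc.exists_isMaxOn (Set.nonempty_Icc.mpr hL.le)
    (hμ.continuous.continuousOn (s := Set.Icc 0 L))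
  set C : ℝ := μ p₀ with hCdef
  have hCpos : 0 < C := hpos p₀
  have hbound : ∀ x, μ x ≤ C := by
    intro x
    obtain ⟨y, hy, hxy⟩ := hper.exists_mem_Ico₀ hL x
    rw [hxy]
    exact isMaxOn_iff.mp hC y ⟨hy.1, hy.2.le⟩
  have hconst : MeasureTheory.IntegrableOn (fun _ : ℝ => C⁻¹) s := by
    apply MeasureTheory.Integrable.mono' hint aestronglyMeasurable_const
    apply Filter.Eventually.of_forall
    intro a
    rw [Real.norm_eq_abs, abs_of_nonneg (inv_nonneg.mpr hCpos.le)]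
    exact inv_anti₀ (hpos a) (hbound a)
  rw [MeasureTheory.integrableOn_const_iff] at hconst
  rcases hconst with h | h
  · exact (inv_ne_zero hCpos.ne') (enorm_eq_zero.mp h)
  · rw [hs] at h
    exact absurd h (lt_irrefl _)

end Periodic


/-- Let `π : S → M¹` be a Killing submersion from a complete surface
with Killing length `μ`.  (1) If `M¹` is a circle `𝕊¹(R)` then `S` is parabolic
(every `x`-periodic subharmonic function bounded above is constant).  (2) If `M¹ = ℝ`
then `S` is parabolic iff `∫_{-∞}^0 dx/μ = ∞` and `∫_0^∞ dx/μ = ∞`. -/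
theorem stmt11 (μ : ℝ → ℝ) (hμ : ContDiff ℝ (⊤ : ℕ∞) μ) (hpos : ∀ x, 0 < μ x) :
    -- (1) base 𝕊¹(R): the quotient surface is parabolic
    ((∀ L > (0 : ℝ), Function.Periodic μ L →
      ∀ u : (Fin 2 → ℝ) → ℝ, ContDiff ℝ 2 u →
        (∀ x, u (x + L • (Pi.single 0 1 : Fin 2 → ℝ)) = u x) →
        (∀ x, 0 ≤ LB (warp μ) u x) → BddAbove (Set.range u) → ∀ x y, u x = u y)
    -- (2) base ℝ: parabolic iff both integrals of 1/μ diverge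
    ∧ (Parabolic (warp μ) ↔
        (¬ IntegrableOn (fun x => (μ x)⁻¹) (Set.Iic 0)
          ∧ ¬ IntegrableOn (fun x => (μ x)⁻¹) (Set.Ici 0)))) := by
  constructor
  · intro L hL hper u hu _hperiodic hsub hbdd
    exact key_parabolic hμ hpos
      (periodic_not_integrable hμ hpos hL hper _ (by simp) measurableSet_Iic)
      (periodic_not_integrable hμ hpos hL hper _ Real.volume_Ici measurableSet_Ici)
      u hu hsub hbdd
  · constructor
    · intro hP
      exact ⟨fun h => not_parabolic_left hμ hpos h hP,
        fun h => not_parabolic_right hμ hpos h hP⟩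
    · rintro ⟨h1, h2⟩
      exact key_parabolic hμ hpos h1 h2
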